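/- Let g : [0, π/3] → ℝ be continuous, strictly positive, differentiable on (0, π/3), and possess one-sided derivatives g′₊(0) at 0 and g′₋(π/3) at π/3. Fix k ≠ −1/2 and consider the restriction h(ε) = G(−1 + ε, 1/2 + kε) of G = q/g(θ) to a line through the point (S₁,S₂) = (−1, 1/2), which lies on the axis θ = π/3. Then h has one-sided derivatives at ε = 0 given by h′±(0) = −3/(2g(π/3)) ± (√3/2)·|1 + 2k|·g′₋(π/3)/g(π/3)². Consequently the convexity condition h′₋(0) ≤ h′₊(0) holds for every such line if and only if g′₋(π/3) ≥ 0. -/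

import Mathlib

/-- The deviatoric stress invariant q(S₁,S₂) = √(3(S₁² + S₁S₂ + S₂²)), with S₃ = −S₁−S₂. -/
noncomputable def qf (S : ℝ × ℝ) : ℝ :=
  Real.sqrt (3 * (S.1 ^ 2 + S.1 * S.2 + S.2 ^ 2))

/-- The Lode angle θ(S₁,S₂) = (1/3)·arccos((27/2)·S₁S₂S₃/q³) ∈ [0, π/3], S₃ = −S₁−S₂. -/
noncomputable def θf (S : ℝ × ℝ) : ℝ :=
  (1 / 3) * Real.arccos ((27 / 2) * (S.1 * S.2 * (-S.1 - S.2)) / (qf S) ^ 3)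

/-- The deviatoric yield function G(S₁,S₂) = q(S₁,S₂)/g(θ(S₁,S₂)) (equal to 0 at the
origin, where q = 0). -/
noncomputable def Gf (g : ℝ → ℝ) (S : ℝ × ℝ) : ℝ :=
  qf S / g (θf S)

/-!
Near `(−1, 1/2)` the product `S₁S₂S₃` is negative, so `cos 3θ < 0` and
`θ = π/3 − |arcsin s|/3`, where `s = 3√3 (S₁−S₂)(2S₁+S₂)(S₁+2S₂) / (2q³)` is a signed
`sin 3θ` (the discriminant identity gives `cos² 3θ + s² = 1`). On the line
`S = (−1+ε, 1/2+kε)` the factor `S₁+2S₂ = (1+2k)ε` vanishes at `ε = 0`, so `s` is smooth with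
`s(0) = 0`, `s'(0) = √3(1+2k)`, and the absolute value produces the one-sided derivatives
`∓√3|1+2k|/3` of `θ`. Since `θ ≤ π/3`, only `g′₋(π/3)` enters the quotient rule for `q/g(θ)`.
-/

open Real Set Filter Topology Asymptotics

theorem HasDerivWithinAt.abs_of_eq_zero {W : ℝ → ℝ} {w w' x : ℝ} {s : Set ℝ}
    (hW : HasDerivWithinAt W w s x) (hx : W x = 0)
    (hs : ∀ y ∈ s, |(y - x) * w| = (y - x) * w') :
    HasDerivWithinAt (fun y => |W y|) w' s x := by
  rw [hasDerivWithinAt_iff_isLittleO] at hW ⊢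
  refine IsBigO.trans_isLittleO (IsBigO.of_bound 1 ?_) hW
  filter_upwards [self_mem_nhdsWithin] with y hy
  simp only [hx, abs_zero, sub_zero, smul_eq_mul, norm_eq_abs, one_mul, ← hs y hy]
  exact abs_abs_sub_abs_le_abs_sub _ _

theorem Real.arcsin_abs (x : ℝ) : arcsin |x| = |arcsin x| := by
  rcases le_total 0 x with hx | hx
  · rw [abs_of_nonneg hx, abs_of_nonneg (arcsin_nonneg.2 hx)]
  · rw [abs_of_nonpos hx, abs_of_nonpos (arcsin_nonpos.2 hx), arcsin_neg]

noncomputable def lodeSin (S : ℝ × ℝ) : ℝ :=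
  3 * √3 * ((S.1 - S.2) * (2 * S.1 + S.2) * (S.1 + 2 * S.2)) / (2 * qf S ^ 3)

theorem qf_sq (S : ℝ × ℝ) : qf S ^ 2 = 3 * (S.1 ^ 2 + S.1 * S.2 + S.2 ^ 2) :=
  sq_sqrt (by nlinarith [sq_nonneg (S.1 + S.2), sq_nonneg S.1, sq_nonneg S.2])

theorem qf_pos {S : ℝ × ℝ} (hS : S ≠ 0) : 0 < qf S := by
  refine sqrt_pos.2 ?_
  have : S.1 ≠ 0 ∨ S.2 ≠ 0 := by
    by_contra! h
    exact hS (Prod.ext h.1 h.2)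
  rcases this with h | h
  · nlinarith [sq_pos_of_ne_zero h, sq_nonneg (S.1 + 2 * S.2)]
  · nlinarith [sq_pos_of_ne_zero h, sq_nonneg (2 * S.1 + S.2)]

theorem lode_cos_sq_add_lodeSin_sq {S : ℝ × ℝ} (hS : S ≠ 0) :
    ((27 / 2) * (S.1 * S.2 * (-S.1 - S.2)) / qf S ^ 3) ^ 2 + lodeSin S ^ 2 = 1 := by
  have hq := (qf_pos hS).ne'
  have h3 : √3 ^ 2 = 3 := sq_sqrt (by norm_num)
  have hq6 : qf S ^ 6 = (3 * (S.1 ^ 2 + S.1 * S.2 + S.2 ^ 2)) ^ 3 := by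
    rw [← qf_sq]; ring
  unfold lodeSin
  field_simp
  rw [h3, hq6]
  -- `4 (S₁² + S₁S₂ + S₂²)³ − 27 (S₁S₂S₃)²` is the discriminant `∏ (Sᵢ − Sⱼ)²` of the roots `Sᵢ`
  ring

theorem θf_le_pi_div_three (S : ℝ × ℝ) : θf S ≤ π / 3 := by
  have := arccos_le_pi ((27 / 2) * (S.1 * S.2 * (-S.1 - S.2)) / qf S ^ 3)
  unfold θf
  linarith

theorem θf_eq_of_prod_nonpos {S : ℝ × ℝ} (hS : S ≠ 0) (hP : S.1 * S.2 * (-S.1 - S.2) ≤ 0) :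
    θf S = π / 3 - |arcsin (lodeSin S)| / 3 := by
  set c := (27 / 2) * (S.1 * S.2 * (-S.1 - S.2)) / qf S ^ 3
  have hc0 : c ≤ 0 := div_nonpos_of_nonpos_of_nonneg (by linarith) (pow_nonneg (qf_pos hS).le 3)
  have hsin : √(1 - (-c) ^ 2) = |lodeSin S| := by
    rw [← sqrt_sq_eq_abs, neg_sq, ← lode_cos_sq_add_lodeSin_sq hS, add_sub_cancel_left]
  have hθ : θf S = (1 / 3) * arccos c := rfl
  rw [hθ, ← neg_neg c, arccos_neg, arccos_eq_arcsin (by linarith), hsin, arcsin_abs]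
  ring

noncomputable def cornerLine (k ε : ℝ) : ℝ × ℝ := (-1 + ε, 1 / 2 + k * ε)

section cornerLine

variable (k : ℝ)

theorem hasDerivAt_cornerLine_fst : HasDerivAt (fun ε => (cornerLine k ε).1) 1 0 :=
  (hasDerivAt_id 0).const_add (-1)

theorem hasDerivAt_cornerLine_snd : HasDerivAt (fun ε => (cornerLine k ε).2) k 0 := by
  have := ((hasDerivAt_id 0).const_mul k).const_add (1 / 2)
  rwa [mul_one] at this

theorem qf_cornerLine_zero : qf (cornerLine k 0) = 3 / 2 := by
  rw [qf, show 3 * ((cornerLine k 0).1 ^ 2 + (cornerLine k 0).1 * (cornerLine k 0).2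
    + (cornerLine k 0).2 ^ 2) = (3 / 2) ^ 2 by norm_num [cornerLine]]
  exact sqrt_sq (by norm_num)

theorem hasDerivAt_qf_cornerLine : HasDerivAt (fun ε => qf (cornerLine k ε)) (-3 / 2) 0 := by
  have h1 := hasDerivAt_cornerLine_fst k
  have h2 := hasDerivAt_cornerLine_snd k
  have hF := (((h1.fun_pow 2).fun_add (h1.fun_mul h2)).fun_add (h2.fun_pow 2)).const_mul 3
  refine (hF.sqrt (by norm_num [cornerLine])).congr_deriv ?_
  rw [← qf, qf_cornerLine_zero]
  norm_num [cornerLine]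
  ring

theorem hasDerivAt_lodeSin_cornerLine :
    HasDerivAt (fun ε => lodeSin (cornerLine k ε)) (√3 * (1 + 2 * k)) 0 := by
  have h1 := hasDerivAt_cornerLine_fst k
  have h2 := hasDerivAt_cornerLine_snd k
  have hD := (((h1.fun_sub h2).fun_mul ((h1.const_mul 2).fun_add h2)).fun_mul
    (h1.fun_add (h2.const_mul 2))).const_mul (3 * √3)
  have hq := ((hasDerivAt_qf_cornerLine k).fun_pow 3).const_mul 2
  refine (hD.fun_div hq (by rw [qf_cornerLine_zero]; norm_num)).congr_deriv ?_
  rw [qf_cornerLine_zero]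
  norm_num [cornerLine]
  ring

theorem lodeSin_cornerLine_zero : lodeSin (cornerLine k 0) = 0 := by
  norm_num [lodeSin, cornerLine]

theorem θf_cornerLine_eventuallyEq :
    (fun ε => θf (cornerLine k ε)) =ᶠ[𝓝 0]
      fun ε => π / 3 - |arcsin (lodeSin (cornerLine k ε))| / 3 := by
  have hP : ∀ᶠ ε in 𝓝 0,
      (cornerLine k ε).1 * (cornerLine k ε).2 * (-(cornerLine k ε).1 - (cornerLine k ε).2) < 0 :=
    ContinuousAt.eventually_lt (by unfold cornerLine; fun_prop) continuousAt_const
      (by norm_num [cornerLine])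
  filter_upwards [hP] with ε hε
  refine θf_eq_of_prod_nonpos (fun h => ?_) hε.le
  simp [h] at hε

theorem θf_cornerLine_zero : θf (cornerLine k 0) = π / 3 := by
  rw [(θf_cornerLine_eventuallyEq k).eq_of_nhds, lodeSin_cornerLine_zero]
  simp

/-- `hs` holds for `a = √3 |1 + 2k|` on `Ici 0` and for `a = -√3 |1 + 2k|` on `Iic 0`. -/
theorem hasDerivWithinAt_θf_cornerLine {s : Set ℝ} {a : ℝ}
    (hs : ∀ ε ∈ s, |ε * (√3 * (1 + 2 * k))| = ε * a) :
    HasDerivWithinAt (fun ε => θf (cornerLine k ε)) (-(a / 3)) s 0 := by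
  have harcsin :
      HasDerivAt (fun ε => arcsin (lodeSin (cornerLine k ε))) (√3 * (1 + 2 * k)) 0 := by
    have h : HasDerivAt arcsin 1 (lodeSin (cornerLine k 0)) := by
      simpa [lodeSin_cornerLine_zero] using hasDerivAt_arcsin (x := 0) (by norm_num) (by norm_num)
    simpa [Function.comp_def] using h.comp 0 (hasDerivAt_lodeSin_cornerLine k)
  have habs := harcsin.hasDerivWithinAt.abs_of_eq_zero (by simp [lodeSin_cornerLine_zero])
    (by simpa using hs)
  exact ((habs.div_const 3).const_sub (π / 3)).congr_of_eventuallyEq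
    (nhdsWithin_le_nhds (θf_cornerLine_eventuallyEq k)) (θf_cornerLine_eventuallyEq k).eq_of_nhds

theorem hasDerivWithinAt_Gf_cornerLine {g : ℝ → ℝ} {gd : ℝ}
    (hpi : HasDerivWithinAt g gd (Iic (π / 3)) (π / 3)) (hg : g (π / 3) ≠ 0) {s : Set ℝ} {a : ℝ}
    (hs : ∀ ε ∈ s, |ε * (√3 * (1 + 2 * k))| = ε * a) :
    HasDerivWithinAt (fun ε => Gf g (cornerLine k ε))
      (-3 / (2 * g (π / 3)) + a * gd / (2 * g (π / 3) ^ 2)) s 0 := by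
  have hpi' : HasDerivWithinAt g gd (Iic (π / 3)) (θf (cornerLine k 0)) := by
    rwa [θf_cornerLine_zero]
  have hgθ : HasDerivWithinAt (fun ε => g (θf (cornerLine k ε))) (gd * -(a / 3)) s 0 :=
    hpi'.comp 0 (hasDerivWithinAt_θf_cornerLine k hs)
      (fun ε _ => θf_le_pi_div_three (cornerLine k ε))
  refine ((hasDerivAt_qf_cornerLine k).hasDerivWithinAt.fun_div hgθ
    (by rwa [θf_cornerLine_zero])).congr_deriv ?_
  rw [qf_cornerLine_zero, θf_cornerLine_zero]
  field_simp
  ring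

end cornerLine

theorem forall_sub_le_add_iff_nonneg {a b d x : ℝ} (hb : 0 < b) (hd : 0 < d) :
    (∀ k : ℝ, k ≠ -1 / 2 → a - b * |1 + 2 * k| * x / d ≤ a + b * |1 + 2 * k| * x / d) ↔
      0 ≤ x := by
  constructor
  · intro h
    have h0 := h 0 (by norm_num)
    norm_num at h0
    by_contra! hx
    have : b * x / d < 0 := div_neg_of_neg_of_pos (mul_neg_of_pos_of_neg hb hx) hd
    linarith
  · intro hx k _
    have : 0 ≤ b * |1 + 2 * k| * x / d := by positivity
    linarith

theorem corner_at_theta_pi_div_three_general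
    (g : ℝ → ℝ)
    (hgpos : ∀ t ∈ Set.Icc 0 (Real.pi / 3), 0 < g t)
    (gdpi : ℝ)
    (hpi : HasDerivWithinAt g gdpi (Set.Iic (Real.pi / 3)) (Real.pi / 3))
    (k : ℝ) :
    HasDerivWithinAt (fun ε : ℝ => Gf g (-1 + ε, 1 / 2 + k * ε))
      (-3 / (2 * g (Real.pi / 3))
        + (Real.sqrt 3 / 2) * |1 + 2 * k| * gdpi / (g (Real.pi / 3)) ^ 2)
      (Set.Ici 0) 0 ∧
    HasDerivWithinAt (fun ε : ℝ => Gf g (-1 + ε, 1 / 2 + k * ε))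
      (-3 / (2 * g (Real.pi / 3))
        - (Real.sqrt 3 / 2) * |1 + 2 * k| * gdpi / (g (Real.pi / 3)) ^ 2)
      (Set.Iic 0) 0 ∧
    ((∀ k' : ℝ, k' ≠ -1 / 2 →
        -3 / (2 * g (Real.pi / 3))
          - (Real.sqrt 3 / 2) * |1 + 2 * k'| * gdpi / (g (Real.pi / 3)) ^ 2 ≤
        -3 / (2 * g (Real.pi / 3))
          + (Real.sqrt 3 / 2) * |1 + 2 * k'| * gdpi / (g (Real.pi / 3)) ^ 2) ↔
      0 ≤ gdpi) := by
  have hg : 0 < g (π / 3) := hgpos _ ⟨by positivity, le_rfl⟩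
  have h3 : |√3| = √3 := abs_of_nonneg (sqrt_nonneg 3)
  refine ⟨?_, ?_, forall_sub_le_add_iff_nonneg (by positivity) (pow_pos hg 2)⟩
  · refine (hasDerivWithinAt_Gf_cornerLine k hpi hg.ne' (a := √3 * |1 + 2 * k|)
      fun ε hε => ?_).congr_deriv (by ring)
    rw [abs_mul, abs_mul, abs_of_nonneg hε, h3]
  · refine (hasDerivWithinAt_Gf_cornerLine k hpi hg.ne' (a := -(√3 * |1 + 2 * k|))
      fun ε hε => ?_).congr_deriv (by ring)
    rw [abs_mul, abs_mul, abs_of_nonpos hε, h3]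
    ring

/-- One-sided derivatives of the restriction h(ε) = G(−1+ε, 1/2+kε) of
G = q/g(θ) to a line through the point (−1,1/2) (on the axis θ = π/3), for k ≠ −1/2:
h′±(0) = −3/(2g(π/3)) ± (√3/2)·|1+2k|·g′₋(π/3)/g(π/3)²; consequently h′₋(0) ≤ h′₊(0)
holds for every such line iff g′₋(π/3) ≥ 0. -/
theorem corner_at_theta_pi_div_three
    (g : ℝ → ℝ)
    (hgc : ContinuousOn g (Set.Icc 0 (Real.pi / 3)))
    (hgpos : ∀ t ∈ Set.Icc 0 (Real.pi / 3), 0 < g t)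
    (hgd : ∀ t ∈ Set.Ioo 0 (Real.pi / 3), DifferentiableAt ℝ g t)
    (gd0 gdpi : ℝ)
    (h0 : HasDerivWithinAt g gd0 (Set.Ici 0) 0)
    (hpi : HasDerivWithinAt g gdpi (Set.Iic (Real.pi / 3)) (Real.pi / 3))
    (k : ℝ) (hk : k ≠ -1 / 2) :
    HasDerivWithinAt (fun ε : ℝ => Gf g (-1 + ε, 1 / 2 + k * ε))
      (-3 / (2 * g (Real.pi / 3))
        + (Real.sqrt 3 / 2) * |1 + 2 * k| * gdpi / (g (Real.pi / 3)) ^ 2)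
      (Set.Ici 0) 0 ∧
    HasDerivWithinAt (fun ε : ℝ => Gf g (-1 + ε, 1 / 2 + k * ε))
      (-3 / (2 * g (Real.pi / 3))
        - (Real.sqrt 3 / 2) * |1 + 2 * k| * gdpi / (g (Real.pi / 3)) ^ 2)
      (Set.Iic 0) 0 ∧
    ((∀ k' : ℝ, k' ≠ -1 / 2 →
        -3 / (2 * g (Real.pi / 3))
          - (Real.sqrt 3 / 2) * |1 + 2 * k'| * gdpi / (g (Real.pi / 3)) ^ 2 ≤
        -3 / (2 * g (Real.pi / 3))
          + (Real.sqrt 3 / 2) * |1 + 2 * k'| * gdpi / (g (Real.pi / 3)) ^ 2) ↔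
      0 ≤ gdpi) :=
  corner_at_theta_pi_div_three_general g hgpos gdpi hpi k
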